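/- Let C = {(x:y:z) ∈ ℙ²(ℂ) : x²·y + x·y² = 0} be the cone over three points (the three concurrent lines x = 0, y = 0, x + y = 0 through (0:0:1)), and let p₁, …, pₙ ∈ C. If the stabilizer subgroup {g ∈ SL(3,ℂ) : g·C = C and g·pᵢ = pᵢ for all i} is infinite, then there exists a projective line l ⊆ ℙ²(ℂ) (the zero set of a nonzero linear form) such that each pᵢ is either the D₄ singular point (0:0:1) or lies on l. -/

import Mathlib

open Matrix

noncomputable section

/-- The special linear group `SL(3, ℂ)`. -/
abbrev SL3 := Matrix.SpecialLinearGroup (Fin 3) ℂ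

/-- The complex projective plane `ℙ²(ℂ)`. -/
abbrev P2 := Projectivization ℂ (Fin 3 → ℂ)

/-- The action of `SL(3, ℂ)` on `ℙ²(ℂ)` induced by the linear action on `ℂ³`. -/
noncomputable def act (g : SL3) (p : P2) : P2 :=
  Projectivization.map (Matrix.SpecialLinearGroup.toLin' g).toLinearMap
    (Matrix.SpecialLinearGroup.toLin' g).injective p

/-- The cone over three points (three concurrent lines), `{x²·y + x·y² = 0}`. -/
def Ccone : Set P2 := {p : P2 | p.rep 0 ^ 2 * p.rep 1 + p.rep 0 * p.rep 1 ^ 2 = 0}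

/-- The `D₄` singular point `(0:0:1)`. -/
def singD4 : P2 := Projectivization.mk ℂ ![0, 0, 1] (by
  intro h; simpa using congrFun h 2)

/-!
An element of `SL(3, ℂ)` preserving the cone permutes its three lines, so it sends each of the
linear forms `x`, `y`, `x + y` to a nonzero multiple of one of them. Only finitely many
permutations occur and `SL(3, ℂ)` has only finitely many scalar matrices, so an infinite
stabilizer contains two elements `g`, `h` inducing the same permutation with `k = h⁻¹ g` not scalar.
This `k` scales each of `x`, `y`, `x + y`, hence scales `x` and `y` by one common factor `c`:
its first two rows are `c e₀` and `c e₁`. A point fixed by `k` is either `(0:0:1)` or an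
eigenvector of `k` for `c`, and then it lies on the line given by the third row of `k - c`,
which is nonzero because `k` is not scalar.
-/

theorem Module.Dual.exists_eq_smul_of_ker_subset_iUnion_ker {ι K M : Type*} [Field K] [Infinite K]
    [AddCommGroup M] [Module K M] [Finite ι] (f : Module.Dual K M) (g : ι → Module.Dual K M)
    (h : (LinearMap.ker f : Set M) ⊆ ⋃ i, (LinearMap.ker (g i) : Set M)) :
    ∃ i, ∃ c : K, g i = c • f := by
  by_contra! hne
  have hnot : ∀ i, ∃ x ∈ LinearMap.ker f, g i x ≠ 0 := by
    intro i
    by_contra! hker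
    have hspan := mem_span_of_iInf_ker_le_ker (L := fun _ : Unit => f) (K := g i)
      (by simpa [SetLike.le_def] using hker)
    rw [Set.range_const] at hspan
    obtain ⟨c, hc⟩ := Submodule.mem_span_singleton.1 hspan
    exact hne i c hc.symm
  obtain ⟨x, hx, hgx⟩ := Module.Dual.exists_forall_mem_ne_zero_of_forall_exists _ g hnot
  obtain ⟨i, hi⟩ := Set.mem_iUnion.1 (h hx)
  exact hgx i hi

theorem Set.Infinite.exists_inv_mul_notMem_of_finite {G α : Type*} [Group G] [Finite α]
    {S : Set G} (hS : S.Infinite) (f : S → α) {Z : Set G} (hZ : Z.Finite) :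
    ∃ g h : S, f g = f h ∧ (h : G)⁻¹ * g ∉ Z := by
  have := hS.to_subtype
  obtain ⟨a, ha⟩ := Finite.exists_infinite_fiber f
  have hT : (f ⁻¹' {a}).Infinite := Set.infinite_coe_iff.1 ha
  obtain ⟨h, hh⟩ := hT.nonempty
  have hinj : Set.InjOn (fun g : S => (h : G)⁻¹ * g) (f ⁻¹' {a}) :=
    fun x _ y _ hxy => Subtype.ext (mul_left_cancel hxy)
  obtain ⟨_, ⟨g, hg, rfl⟩, hgZ⟩ := ((hT.image hinj).sdiff hZ).nonempty
  exact ⟨g, h, hg.trans hh.symm, hgZ⟩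

theorem Matrix.SpecialLinearGroup.finite_center {n R : Type*} [Fintype n] [DecidableEq n]
    [CommRing R] [IsDomain R] :
    (Subgroup.center (SpecialLinearGroup n R) : Set (SpecialLinearGroup n R)).Finite := by
  have : NeZero (max (Fintype.card n) 1) := ⟨by positivity⟩
  have : Finite (Subgroup.center (SpecialLinearGroup n R)) :=
    Finite.of_equiv _ SpecialLinearGroup.center_equiv_rootsOfUnity.toEquiv.symm
  exact Set.toFinite _

theorem Matrix.SpecialLinearGroup.vecMul_inv_mul_eq_smul {n R : Type*} [Fintype n] [DecidableEq n]
    [Field R] {g h : SpecialLinearGroup n R} {u w : n → R} {c d : R}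
    (hg : w ᵥ* (g : Matrix n n R) = c • u) (hh : w ᵥ* (h : Matrix n n R) = d • u) (hd : d ≠ 0) :
    u ᵥ* ((h⁻¹ * g : SpecialLinearGroup n R) : Matrix n n R) = (c / d) • u := by
  calc u ᵥ* ((h⁻¹ * g : SpecialLinearGroup n R) : Matrix n n R)
      = d⁻¹ • ((d • u) ᵥ* ((h⁻¹ * g : SpecialLinearGroup n R) : Matrix n n R)) := by
        rw [smul_vecMul, smul_smul, inv_mul_cancel₀ hd, one_smul]
    _ = d⁻¹ • (w ᵥ* (g : Matrix n n R)) := by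
        rw [← hh, vecMul_vecMul, ← SpecialLinearGroup.coe_mul, mul_inv_cancel_left]
    _ = (c / d) • u := by rw [hg, smul_smul, div_eq_inv_mul]

theorem Matrix.SpecialLinearGroup.vecMul_eq_zero_iff {n R : Type*} [Fintype n] [DecidableEq n]
    [CommRing R] (g : SpecialLinearGroup n R) {w : n → R} :
    w ᵥ* (g : Matrix n n R) = 0 ↔ w = 0 := by
  refine ⟨fun h => ?_, by rintro rfl; exact zero_vecMul _⟩
  have h' := congrArg (· ᵥ* ((g⁻¹ : SpecialLinearGroup n R) : Matrix n n R)) h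
  rwa [vecMul_vecMul, ← SpecialLinearGroup.coe_mul, mul_inv_cancel, SpecialLinearGroup.coe_one,
    vecMul_one, zero_vecMul] at h'

theorem Matrix.SpecialLinearGroup.mulVec_ne_zero {n R : Type*} [Fintype n] [DecidableEq n]
    [CommRing R] (g : SpecialLinearGroup n R) {v : n → R} (hv : v ≠ 0) :
    (g : Matrix n n R) *ᵥ v ≠ 0 :=
  (SpecialLinearGroup.toLin' g).map_ne_zero_iff.2 hv

theorem Matrix.eq_scalar_of_row_eq_smul_single {n R : Type*} [Fintype n] [DecidableEq n]
    [CommRing R] {M : Matrix n n R} {c : R} (h : ∀ i, M i = c • Pi.single i 1) :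
    M = scalar n c := by
  ext i j
  rw [h i]
  simp [Pi.single_apply, diagonal_apply, eq_comm]

theorem Matrix.SpecialLinearGroup.mem_center_of_coe_eq_scalar {n R : Type*} [Fintype n]
    [DecidableEq n] [CommRing R] {k : SpecialLinearGroup n R} {c : R}
    (hk : (k : Matrix n n R) = scalar n c) : k ∈ Subgroup.center (SpecialLinearGroup n R) :=
  Subgroup.mem_center_iff.2 fun B => Subtype.ext <| by
    rw [SpecialLinearGroup.coe_mul, SpecialLinearGroup.coe_mul, hk]
    exact (scalar_commute c (Commute.all c) (B : Matrix n n R)).symm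

open Projectivization

def lineForm : Fin 3 → Fin 3 → ℂ :=
  ![Pi.single 0 1, Pi.single 1 1, Pi.single 0 1 + Pi.single 1 1]

theorem lineForm_ne_zero (j : Fin 3) : lineForm j ≠ 0 := by
  fin_cases j <;> simp [lineForm, funext_iff, Fin.forall_fin_succ]

theorem mem_Ccone_mk_iff (v : Fin 3 → ℂ) (hv : v ≠ 0) :
    mk ℂ v hv ∈ Ccone ↔ ∃ j, lineForm j ⬝ᵥ v = 0 := by
  obtain ⟨a, ha⟩ := exists_smul_eq_mk_rep ℂ v hv
  simp only [Ccone, Set.mem_ofPred_eq, ← ha, Units.smul_def, Pi.smul_apply, smul_eq_mul]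
  rw [show ∀ x y : ℂ, (↑a * x) ^ 2 * (↑a * y) + ↑a * x * (↑a * y) ^ 2 = ↑a ^ 3 * (x * y * (x + y))
    from fun x y => by ring]
  simp [a.ne_zero, Fin.exists_fin_succ, lineForm, or_assoc]


theorem act_mk (g : SpecialLinearGroup (Fin 3) ℂ) (v : Fin 3 → ℂ) (hv : v ≠ 0) :
    act g (mk ℂ v hv) =
      mk ℂ ((g : Matrix (Fin 3) (Fin 3) ℂ) *ᵥ v) (SpecialLinearGroup.mulVec_ne_zero g hv) :=
  rfl

theorem act_mul (g h : SpecialLinearGroup (Fin 3) ℂ) (q : P2) :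
    act (g * h) q = act g (act h q) := by
  induction q using Projectivization.ind with
  | h v hv => simp only [act_mk, mulVec_mulVec]; rfl

theorem act_one (q : P2) : act 1 q = q := by
  induction q using Projectivization.ind with
  | h v hv => rw [act_mk]; congr 1; exact one_mulVec v

theorem act_inv_mul_eq_self {g h : SpecialLinearGroup (Fin 3) ℂ} {q : P2} (hg : act g q = q)
    (hh : act h q = q) : act (h⁻¹ * g) q = q := by
  conv_rhs => rw [← act_one q, ← inv_mul_cancel h, act_mul, hh]
  rw [act_mul, hg]

theorem eq_singD4_of_rep {q : P2} (h0 : q.rep 0 = 0) (h1 : q.rep 1 = 0) : q = singD4 := by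
  rw [← mk_rep q, singD4, mk_eq_mk_iff']
  exact ⟨q.rep 2, by ext i; fin_cases i <;> simp [h0, h1]⟩

theorem exists_lineForm_vecMul_eq_smul {g : SpecialLinearGroup (Fin 3) ℂ}
    (hg : Set.MapsTo (act g) Ccone Ccone) (j : Fin 3) :
    ∃ k, ∃ c : ℂ, c ≠ 0 ∧ lineForm k ᵥ* (g : Matrix (Fin 3) (Fin 3) ℂ) = c • lineForm j := by
  -- `g` maps the plane `lineForm j = 0` into the cone, the union of the planes `lineForm k = 0`
  have hcover : (LinearMap.ker (dotProductEquiv ℂ (Fin 3) (lineForm j)) : Set (Fin 3 → ℂ)) ⊆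
      ⋃ k, (LinearMap.ker (dotProductEquiv ℂ (Fin 3)
        (lineForm k ᵥ* (g : Matrix (Fin 3) (Fin 3) ℂ))) : Set (Fin 3 → ℂ)) := by
    intro v hv
    simp only [SetLike.mem_coe, LinearMap.mem_ker, dotProductEquiv_apply_apply, Set.mem_iUnion,
      ← dotProduct_mulVec] at hv ⊢
    rcases eq_or_ne v 0 with rfl | hv0
    · simp
    · have hgv := hg ((mem_Ccone_mk_iff v hv0).2 ⟨j, hv⟩)
      rwa [act_mk, mem_Ccone_mk_iff] at hgv
  obtain ⟨k, c, hc⟩ := Module.Dual.exists_eq_smul_of_ker_subset_iUnion_ker _ _ hcover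
  rw [← map_smul] at hc
  have hk := (dotProductEquiv ℂ (Fin 3)).injective hc
  refine ⟨k, c, ?_, hk⟩
  rintro rfl
  exact lineForm_ne_zero k ((SpecialLinearGroup.vecMul_eq_zero_iff g).1 (by simpa using hk))

theorem exists_row_eq_smul_single {k : Matrix (Fin 3) (Fin 3) ℂ}
    (h : ∀ j, ∃ c : ℂ, lineForm j ᵥ* k = c • lineForm j) :
    ∃ c : ℂ, k 0 = c • Pi.single 0 1 ∧ k 1 = c • Pi.single 1 1 := by
  obtain ⟨a, ha⟩ := h 0
  obtain ⟨b, hb⟩ := h 1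
  obtain ⟨c, hc⟩ := h 2
  simp only [lineForm, Matrix.cons_val, single_one_vecMul, add_vecMul] at ha hb hc
  rw [ha, hb] at hc
  have hac := congrFun hc 0
  have hbc := congrFun hc 1
  simp only [Pi.add_apply, Pi.smul_apply, Pi.single_eq_same, smul_eq_mul, mul_one, ne_eq,
    zero_ne_one, one_ne_zero, not_false_eq_true, Pi.single_eq_of_ne, mul_zero, add_zero,
    zero_add] at hac hbc
  exact ⟨c, by rw [← hac]; exact ha, by rw [← hbc]; exact hb⟩

theorem exists_smul_rep_eq_mulVec_of_act_eq_self {k : SpecialLinearGroup (Fin 3) ℂ} {q : P2}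
    (hq : act k q = q) : ∃ a : ℂ, a • q.rep = (k : Matrix (Fin 3) (Fin 3) ℂ) *ᵥ q.rep := by
  rw [← mk_rep q, act_mk] at hq
  exact (mk_eq_mk_iff' ℂ _ _ _ _).1 hq

theorem eigenvector_eq_zero_or_dotProduct_eq_zero {M : Matrix (Fin 3) (Fin 3) ℂ} {a c : ℂ}
    {v : Fin 3 → ℂ} (h0 : M 0 = c • Pi.single 0 1) (h1 : M 1 = c • Pi.single 1 1)
    (hv : a • v = M *ᵥ v) :
    (v 0 = 0 ∧ v 1 = 0) ∨ (M 2 - c • Pi.single 2 1) ⬝ᵥ v = 0 := by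
  have e0 := congrFun hv 0
  have e1 := congrFun hv 1
  have e2 := congrFun hv 2
  simp only [Pi.smul_apply, smul_eq_mul, mulVec_apply, row, h0, h1, smul_dotProduct,
    single_dotProduct, one_mul] at e0 e1 e2
  by_cases hsing : v 0 = 0 ∧ v 1 = 0
  · exact Or.inl hsing
  · right
    have hac : a = c := by
      rcases not_and_or.1 hsing with hx | hy
      · exact mul_right_cancel₀ hx e0
      · exact mul_right_cancel₀ hy e1
    rw [sub_dotProduct, smul_dotProduct, single_dotProduct, ← e2, hac]
    simp

theorem coneD4_stabilizer_general (n : ℕ) (p : Fin n → P2)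
    (hstab : {g : SL3 | act g '' Ccone = Ccone ∧ ∀ i, act g (p i) = p i}.Infinite) :
    ∃ l : Fin 3 → ℂ, l ≠ 0 ∧ ∀ i, p i = singD4 ∨
      l 0 * (p i).rep 0 + l 1 * (p i).rep 1 + l 2 * (p i).rep 2 = 0 := by
  choose σ c hc hσ using fun g : {g : SL3 | act g '' Ccone = Ccone ∧ ∀ i, act g (p i) = p i} =>
    exists_lineForm_vecMul_eq_smul (Set.mapsTo_iff_image_subset.2 g.2.1.subset)
  obtain ⟨g, h, hgh, hcentral⟩ :=
    hstab.exists_inv_mul_notMem_of_finite σ SpecialLinearGroup.finite_center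
  set k : SL3 := (h : SL3)⁻¹ * g
  obtain ⟨a, h0, h1⟩ := exists_row_eq_smul_single (k := (k : Matrix (Fin 3) (Fin 3) ℂ)) fun j =>
    ⟨c g j / c h j, SpecialLinearGroup.vecMul_inv_mul_eq_smul (hgh ▸ hσ g j) (hσ h j) (hc h j)⟩
  refine ⟨(k : Matrix (Fin 3) (Fin 3) ℂ) 2 - a • Pi.single 2 1, fun hl => hcentral ?_, fun i => ?_⟩
  · refine SpecialLinearGroup.mem_center_of_coe_eq_scalar
      (eq_scalar_of_row_eq_smul_single (c := a) fun i => ?_)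
    fin_cases i
    exacts [h0, h1, sub_eq_zero.1 hl]
  · obtain ⟨b, hb⟩ :=
      exists_smul_rep_eq_mulVec_of_act_eq_self (act_inv_mul_eq_self (g.2.2 i) (h.2.2 i))
    rcases eigenvector_eq_zero_or_dotProduct_eq_zero h0 h1 hb with ⟨hx, hy⟩ | hl
    · exact Or.inl (eq_singD4_of_rep hx hy)
    · exact Or.inr (by simpa [dotProduct, Fin.sum_univ_three] using hl)

/-- If marked points on the cone over three points have infinite `SL(3,ℂ)` stabilizer,
then there is a projective line `l` (the zero set of a nonzero linear form) such that
every marked point is the `D₄` singular point `(0:0:1)` or lies on `l`. -/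
theorem coneD4_stabilizer (n : ℕ) (p : Fin n → P2)
    (hp : ∀ i, p i ∈ Ccone)
    (hstab : {g : SL3 | act g '' Ccone = Ccone ∧ ∀ i, act g (p i) = p i}.Infinite) :
    ∃ l : Fin 3 → ℂ, l ≠ 0 ∧ ∀ i, p i = singD4 ∨
      l 0 * (p i).rep 0 + l 1 * (p i).rep 1 + l 2 * (p i).rep 2 = 0 :=
  coneD4_stabilizer_general n p hstab
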